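/- Let D be a resolvable Steiner 2-((sk−s+1)k, k, 1) design with s, k ≥ 2, and suppose D admits a set S of m mutually compatible resolutions. Then m ≤ (sk−k+1)s. -/

import Mathlib

def IsSteinerSystem (v k : ℕ) {X : Type*} [Fintype X] [DecidableEq X]
    (B : Finset (Finset X)) : Prop :=
  Fintype.card X = v ∧ (∀ b ∈ B, b.card = k) ∧
    ∀ p q : X, p ≠ q → ∃! b, b ∈ B ∧ p ∈ b ∧ q ∈ b

/-- A parallel class: a set of pairwise disjoint blocks covering every point. -/
def IsParallelClass {X : Type*} [Fintype X] [DecidableEq X]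
    (B : Finset (Finset X)) (P : Finset (Finset X)) : Prop :=
  P ⊆ B ∧ (∀ b1 ∈ P, ∀ b2 ∈ P, b1 ≠ b2 → Disjoint b1 b2) ∧ ∀ p : X, ∃ b ∈ P, p ∈ b

/-- A resolution: a partition of the block set into parallel classes. -/
def IsResolution {X : Type*} [Fintype X] [DecidableEq X]
    (B : Finset (Finset X)) (R : Finset (Finset (Finset X))) : Prop :=
  (∀ P ∈ R, IsParallelClass B P) ∧ ∀ b ∈ B, ∃! P, P ∈ R ∧ b ∈ P

/-- Two resolutions are compatible if they share exactly one parallel class and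
any two of their other parallel classes share at most one block. -/
def Compatible {X : Type*} [Fintype X] [DecidableEq X]
    (R1 R2 : Finset (Finset (Finset X))) : Prop :=
  ∃ P : Finset (Finset X), R1 ∩ R2 = {P} ∧
    ∀ P' ∈ R1, ∀ Q' ∈ R2, P' ≠ P → Q' ≠ P → (P' ∩ Q').card ≤ 1

/-!
Count the ordered pairs `(c, d)` of distinct disjoint blocks. Every point lies on `r = sk + 1`
blocks, every parallel class has `n = sk - s + 1` blocks, so there are `b = rn` blocks and each
block is disjoint from `(n - 1)(sk - k + 1)` others. A resolution covers the `r n (n - 1)` pairs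
lying in a common parallel class, and two compatible resolutions have in common only the
`n (n - 1)` pairs of their shared class: two blocks lying together in non-shared classes would make
those classes share two blocks. Cauchy–Schwarz applied to the number of resolutions covering each
pair gives `m r ≤ (sk - k + 1)(r + m - 1)`, that is `m ≤ (sk - k + 1) s`.
-/

open Finset

namespace Finset

variable {ι κ α : Type*} [DecidableEq α] {U : Finset α}

theorem sum_card_filter_mem_eq_sum_card {T : Finset κ} {C : κ → Finset α}
    (hC : ∀ i ∈ T, C i ⊆ U) :
    ∑ x ∈ U, #{i ∈ T | x ∈ C i} = ∑ i ∈ T, #(C i) :=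
  (sum_card_bipartiteAbove_eq_sum_card_bipartiteBelow _).trans <| sum_congr rfl fun i hi => by
    rw [bipartiteBelow, filter_mem_eq_inter, inter_eq_right.mpr (hC i hi)]

theorem card_mul_sq_le_of_card_inter_le [DecidableEq ι] {S : Finset ι} {A : ι → Finset α}
    {a c : ℕ} (hAU : ∀ i ∈ S, A i ⊆ U) (hA : ∀ i ∈ S, #(A i) = a)
    (hAA : ∀ i ∈ S, ∀ j ∈ S, i ≠ j → #(A i ∩ A j) ≤ c) :
    #S * a ^ 2 ≤ #U * (a + (#S - 1) * c) := by
  set F : α → ℕ := fun x => #{i ∈ S | x ∈ A i}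
  have hsum : ∑ x ∈ U, F x = #S * a := by
    rw [sum_card_filter_mem_eq_sum_card hAU, sum_const_nat hA]
  have hsq : ∑ x ∈ U, F x ^ 2 = ∑ i ∈ S, ∑ j ∈ S, #(A i ∩ A j) := by
    rw [← sum_product', ← sum_card_filter_mem_eq_sum_card fun p hp =>
      inter_subset_left.trans (hAU p.1 (mem_product.1 hp).1)]
    refine sum_congr rfl fun x _ => ?_
    simp only [F, sq, ← card_product, mem_inter, ← filter_product]
  have hrow : ∀ i ∈ S, ∑ j ∈ S, #(A i ∩ A j) ≤ a + (#S - 1) * c := fun i hi => by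
    rw [← add_sum_erase S _ hi, inter_self, hA i hi, ← card_erase_of_mem hi, ← smul_eq_mul]
    gcongr
    exact sum_le_card_nsmul _ _ _ fun j hj =>
      hAA i hi j (mem_of_mem_erase hj) (ne_of_mem_erase hj).symm
  rcases (#S).eq_zero_or_pos with hS | hS
  · simp [hS]
  refine Nat.le_of_mul_le_mul_left ?_ hS
  calc #S * (#S * a ^ 2) = (∑ x ∈ U, F x) ^ 2 := by rw [hsum]; ring
    _ ≤ #U * ∑ x ∈ U, F x ^ 2 := sq_sum_le_card_mul_sum_sq
    _ ≤ #U * (#S * (a + (#S - 1) * c)) := by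
      rw [hsq]; gcongr; exact (sum_le_card_nsmul _ _ _ hrow).trans_eq (smul_eq_mul ..)
    _ = #S * (#U * (a + (#S - 1) * c)) := by ring

end Finset

section

variable {X : Type*} [DecidableEq X]

def disjointPairs (B : Finset (Finset X)) : Finset (Finset X × Finset X) :=
  {π ∈ B ×ˢ B | π.1 ≠ π.2 ∧ Disjoint π.1 π.2}

def parallelPairs (R : Finset (Finset (Finset X))) : Finset (Finset X × Finset X) :=
  R.biUnion offDiag

theorem card_disjointPairs (B : Finset (Finset X)) :
    #(disjointPairs B) = ∑ c ∈ B, #{d ∈ B | c ≠ d ∧ Disjoint c d} := by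
  simp only [disjointPairs, card_filter, sum_product]

variable [Fintype X] {B : Finset (Finset X)} {v k r : ℕ}

namespace IsSteinerSystem

theorem card_filter_mem_mul_add_one (hD : IsSteinerSystem v k B) (p : X) :
    #{b ∈ B | p ∈ b} * (k - 1) + 1 = v := by
  obtain ⟨hv, hk, hpair⟩ := hD
  have hcover : univ.erase p = {b ∈ B | p ∈ b}.biUnion (·.erase p) := by
    ext q
    simp only [mem_erase, mem_univ, and_true, mem_biUnion, mem_filter]
    refine ⟨fun hq => ?_, fun ⟨b, _, hq, _⟩ => hq⟩
    obtain ⟨b, ⟨hb, hpb, hqb⟩, -⟩ := hpair p q (Ne.symm hq)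
    exact ⟨b, ⟨hb, hpb⟩, hq, hqb⟩
  have hdisj : (({b ∈ B | p ∈ b} : Finset _) : Set (Finset X)).PairwiseDisjoint (·.erase p) := by
    intro b₁ hb₁ b₂ hb₂ hne
    rw [mem_coe, mem_filter] at hb₁ hb₂
    refine disjoint_left.2 fun q hq₁ hq₂ => hne ?_
    rw [mem_erase] at hq₁ hq₂
    exact (hpair p q (Ne.symm hq₁.1)).unique ⟨hb₁.1, hb₁.2, hq₁.2⟩ ⟨hb₂.1, hb₂.2, hq₂.2⟩
  have hsum : ∑ b ∈ B with p ∈ b, #(b.erase p) = #{b ∈ B | p ∈ b} * (k - 1) := by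
    rw [sum_const_nat fun b hb => ?_]
    rw [mem_filter] at hb
    rw [card_erase_of_mem hb.2, hk b hb.1]
  have := congrArg card hcover
  rw [card_erase_of_mem (mem_univ p), card_univ, hv, card_biUnion hdisj, hsum] at this
  have : 0 < v := hv ▸ Fintype.card_pos_iff.2 ⟨p⟩
  omega

theorem card_filter_ne_not_disjoint (hD : IsSteinerSystem v k B)
    (hr : ∀ p, #{b ∈ B | p ∈ b} = r) {c : Finset X} (hc : c ∈ B) :
    #{d ∈ B | c ≠ d ∧ ¬Disjoint c d} = k * (r - 1) := by
  obtain ⟨-, hk, hpair⟩ := hD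
  have hcover : {d ∈ B | c ≠ d ∧ ¬Disjoint c d} = c.biUnion ({b ∈ B | · ∈ b}.erase c) := by
    ext d
    simp only [mem_filter, mem_biUnion, mem_erase, not_disjoint_iff]
    constructor
    · rintro ⟨hd, hcd, p, hpc, hpd⟩
      exact ⟨p, hpc, Ne.symm hcd, hd, hpd⟩
    · rintro ⟨p, hpc, hdc, hd, hpd⟩
      exact ⟨hd, Ne.symm hdc, p, hpc, hpd⟩
  have hdisj : (c : Set X).PairwiseDisjoint ({b ∈ B | · ∈ b}.erase c) := by
    intro p hp q hq hpq
    refine disjoint_left.2 fun d hd₁ hd₂ => ?_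
    rw [mem_erase, mem_filter] at hd₁ hd₂
    exact hd₁.1 ((hpair p q hpq).unique ⟨hd₁.2.1, hd₁.2.2, hd₂.2.2⟩ ⟨hc, hp, hq⟩)
  rw [hcover, card_biUnion hdisj, sum_congr rfl fun p hp => by
    rw [card_erase_of_mem (mem_filter.2 ⟨hc, hp⟩), hr p], sum_const, smul_eq_mul, hk c hc]

theorem card_filter_ne_disjoint_add (hD : IsSteinerSystem v k B)
    (hr : ∀ p, #{b ∈ B | p ∈ b} = r) {c : Finset X} (hc : c ∈ B) :
    #{d ∈ B | c ≠ d ∧ Disjoint c d} + k * (r - 1) + 1 = #B := by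
  rw [← hD.card_filter_ne_not_disjoint hr hc, ← filter_filter, ← filter_filter,
    card_filter_add_card_filter_not, filter_ne, card_erase_add_one hc]

end IsSteinerSystem

theorem IsParallelClass.card_filter_mem {P : Finset (Finset X)} (hP : IsParallelClass B P)
    (p : X) : #{b ∈ P | p ∈ b} = 1 := by
  obtain ⟨b, hb, hpb⟩ := hP.2.2 p
  refine card_eq_one.2 ⟨b, eq_singleton_iff_unique_mem.2 ⟨mem_filter.2 ⟨hb, hpb⟩, fun d hd => ?_⟩⟩
  rw [mem_filter] at hd
  by_contra hne
  exact disjoint_left.1 (hP.2.1 d hd.1 b hb hne) hd.2 hpb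

theorem IsParallelClass.card_mul (hD : IsSteinerSystem v k B) {P : Finset (Finset X)}
    (hP : IsParallelClass B P) : #P * k = v := by
  rw [← hD.1, ← mul_one (Fintype.card X), ← sum_card hP.card_filter_mem,
    sum_congr rfl fun b hb => hD.2.1 b (hP.1 hb), sum_const, smul_eq_mul]

namespace IsResolution

variable {R : Finset (Finset (Finset X))}

theorem biUnion_eq (hR : IsResolution B R) : R.biUnion id = B := by
  ext b
  simp only [mem_biUnion, id]
  refine ⟨fun ⟨P, hP, hb⟩ => (hR.1 P hP).1 hb, fun hb => ?_⟩
  obtain ⟨P, ⟨hP, hbP⟩, -⟩ := hR.2 b hb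
  exact ⟨P, hP, hbP⟩

theorem pairwiseDisjoint (hR : IsResolution B R) :
    (R : Set (Finset (Finset X))).PairwiseDisjoint id :=
  fun P hP _ hQ hne => disjoint_left.2 fun b hbP hbQ =>
    hne ((hR.2 b ((hR.1 P hP).1 hbP)).unique ⟨hP, hbP⟩ ⟨hQ, hbQ⟩)

theorem card_eq_card_filter_mem (hR : IsResolution B R) (p : X) : #R = #{b ∈ B | p ∈ b} := by
  rw [← hR.biUnion_eq, filter_biUnion,
    card_biUnion (hR.pairwiseDisjoint.mono fun P => filter_subset _ _), card_eq_sum_ones]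
  exact sum_congr rfl fun P hP => ((hR.1 P hP).card_filter_mem p).symm

theorem card_eq_card_mul {n : ℕ} (hR : IsResolution B R) (hn : ∀ P ∈ R, #P = n) :
    #B = #R * n := by
  rw [← hR.biUnion_eq, card_biUnion hR.pairwiseDisjoint]
  exact sum_const_nat hn

theorem card_parallelPairs {n : ℕ} (hR : IsResolution B R) (hn : ∀ P ∈ R, #P = n) :
    #(parallelPairs R) = #R * (n * n - n) := by
  have hdisj : (R : Set (Finset (Finset X))).PairwiseDisjoint offDiag := fun P hP Q hQ hne => by
    have hPQ : Disjoint P Q := hR.pairwiseDisjoint hP hQ hne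
    rw [Function.onFun, disjoint_iff_inter_eq_empty, ← offDiag_inter,
      disjoint_iff_inter_eq_empty.1 hPQ, offDiag_empty]
  rw [parallelPairs, card_biUnion hdisj]
  exact sum_const_nat fun P hP => by rw [offDiag_card, hn P hP]

theorem parallelPairs_subset (hR : IsResolution B R) : parallelPairs R ⊆ disjointPairs B := by
  intro π hπ
  simp only [parallelPairs, mem_biUnion, mem_offDiag] at hπ
  obtain ⟨P, hP, h₁, h₂, hne⟩ := hπ
  have hPc := hR.1 P hP
  exact mem_filter.2 ⟨mem_product.2 ⟨hPc.1 h₁, hPc.1 h₂⟩, hne, hPc.2.1 _ h₁ _ h₂ hne⟩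

end IsResolution

theorem Compatible.inter_parallelPairs_subset {R R' : Finset (Finset (Finset X))}
    (hR : IsResolution B R) (h : Compatible R R') :
    ∃ P ∈ R, parallelPairs R ∩ parallelPairs R' ⊆ P.offDiag := by
  obtain ⟨P₀, hI, hle⟩ := h
  have hP₀ : P₀ ∈ R ∧ P₀ ∈ R' := mem_inter.1 (hI ▸ mem_singleton_self P₀)
  refine ⟨P₀, hP₀.1, ?_⟩
  rintro ⟨b, d⟩ hbd
  simp only [parallelPairs, mem_inter, mem_biUnion, mem_offDiag] at hbd ⊢
  obtain ⟨⟨P, hP, hbP, hdP, hbd⟩, Q, hQ, hbQ, hdQ, -⟩ := hbd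
  rcases eq_or_ne P P₀ with rfl | hPP₀
  · exact ⟨hbP, hdP, hbd⟩
  exfalso
  rcases eq_or_ne Q P₀ with rfl | hQP₀
  · exact hPP₀ ((hR.2 b ((hR.1 P hP).1 hbP)).unique ⟨hP, hbP⟩ ⟨hP₀.1, hbQ⟩)
  · have := card_le_card (insert_subset (mem_inter.2 ⟨hbP, hbQ⟩)
      (singleton_subset_iff.2 (mem_inter.2 ⟨hdP, hdQ⟩)))
    rw [card_pair hbd] at this
    exact absurd (hle P hP Q hQ hPP₀ hQP₀) (by omega)

theorem IsSteinerSystem.card_mul_le_of_compatible [Nonempty X] {n : ℕ}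
    (hD : IsSteinerSystem v k B) (hr : ∀ p, #{b ∈ B | p ∈ b} = r)
    {S : Finset (Finset (Finset (Finset X)))}
    (hres : ∀ R ∈ S, IsResolution B R) (hn : ∀ R ∈ S, ∀ P ∈ R, #P = n)
    (hcompat : ∀ R₁ ∈ S, ∀ R₂ ∈ S, R₁ ≠ R₂ → Compatible R₁ R₂) :
    #S * r * (n - 1) ≤ (r * n - 1 - k * (r - 1)) * (r + #S - 1) := by
  rcases S.eq_empty_or_nonempty with rfl | ⟨R₀, hR₀⟩
  · simp
  obtain ⟨p⟩ := ‹Nonempty X›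
  have hRr : ∀ R ∈ S, #R = r := fun R hR => ((hres R hR).card_eq_card_filter_mem p).trans (hr p)
  have hB : #B = r * n := by rw [(hres R₀ hR₀).card_eq_card_mul (hn R₀ hR₀), hRr R₀ hR₀]
  set D := r * n - 1 - k * (r - 1)
  have hU : #(disjointPairs B) = r * n * D := by
    rw [card_disjointPairs, sum_const_nat fun c hc => ?_, hB]
    have := hD.card_filter_ne_disjoint_add hr hc
    omega
  have key := card_mul_sq_le_of_card_inter_le (S := S) (U := disjointPairs B)
    (fun R hR => (hres R hR).parallelPairs_subset)
    (fun R hR => by rw [(hres R hR).card_parallelPairs (hn R hR), hRr R hR, ← Nat.mul_sub_one])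
    (c := n * (n - 1)) fun R₁ h₁ R₂ h₂ hne => by
      obtain ⟨P, hP, hsub⟩ := (hcompat R₁ h₁ R₂ h₂ hne).inter_parallelPairs_subset (hres R₁ h₁)
      exact (card_le_card hsub).trans_eq (by rw [offDiag_card, hn R₁ h₁ P hP, Nat.mul_sub_one])
  rw [hU] at key
  rcases Nat.eq_zero_or_pos (r * n * (n - 1) * n) with h0 | hpos
  · simp only [mul_eq_zero] at h0
    rcases h0 with ((h | h) | h) | h <;> simp [h]
  refine Nat.le_of_mul_le_mul_right ?_ hpos
  calc #S * r * (n - 1) * (r * n * (n - 1) * n) = #S * (r * (n * (n - 1))) ^ 2 := by ring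
    _ ≤ r * n * D * (r * (n * (n - 1)) + (#S - 1) * (n * (n - 1))) := key
    _ = D * (r + #S - 1) * (r * n * (n - 1) * n) := by
      rw [Nat.add_sub_assoc (card_pos.2 ⟨R₀, hR₀⟩)]; ring

end

theorem max_compatible_resolutions (s k m : ℕ) (hs : 2 ≤ s) (hk : 2 ≤ k)
    {X : Type*} [Fintype X] [DecidableEq X] (B : Finset (Finset X))
    (hD : IsSteinerSystem ((s * k - s + 1) * k) k B)
    (S : Finset (Finset (Finset (Finset X))))
    (hres : ∀ R ∈ S, IsResolution B R)
    (hcompat : ∀ R1 ∈ S, ∀ R2 ∈ S, R1 ≠ R2 → Compatible R1 R2)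
    (hm : S.card = m) :
    m ≤ (s * k - k + 1) * s := by
  obtain ⟨t, rfl⟩ : ∃ t, s = t + 1 := ⟨s - 1, by omega⟩
  obtain ⟨j, rfl⟩ : ∃ j, k = j + 1 := ⟨k - 1, by omega⟩
  rw [show (t + 1) * (j + 1) - (t + 1) = (t + 1) * j by
    rw [mul_add_one, Nat.add_sub_cancel]] at hD
  rw [show (t + 1) * (j + 1) - (j + 1) = t * (j + 1) by
    rw [add_one_mul t, Nat.add_sub_cancel], ← hm]
  have : Nonempty X := Fintype.card_pos_iff.1 (hD.1 ▸ by positivity)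
  have hdeg : ∀ p, #{b ∈ B | p ∈ b} = (t + 1) * (j + 1) + 1 := fun p => by
    have := hD.card_filter_mem_mul_add_one p
    rw [Nat.add_sub_cancel] at this
    exact Nat.eq_of_mul_eq_mul_right (by omega : 0 < j) (by linarith)
  have hclass : ∀ R ∈ S, ∀ P ∈ R, #P = (t + 1) * j + 1 := fun R hR P hP =>
    Nat.eq_of_mul_eq_mul_right j.succ_pos (((hres R hR).1 P hP).card_mul hD)
  have key := hD.card_mul_le_of_compatible hdeg hres hclass hcompat
  rcases (#S).eq_zero_or_pos with h0 | hpos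
  · simp [h0]
  have hdisjointCount :
      ((t + 1) * (j + 1) + 1) * ((t + 1) * j + 1) - 1 - (j + 1) * ((t + 1) * (j + 1))
        = (t + 1) * j * (t * (j + 1) + 1) := by
    have : ((t + 1) * (j + 1) + 1) * ((t + 1) * j + 1)
        = (t + 1) * j * (t * (j + 1) + 1) + (j + 1) * ((t + 1) * (j + 1)) + 1 := by ring
    omega
  rw [Nat.add_sub_cancel, Nat.add_sub_cancel, hdisjointCount,
    show (t + 1) * (j + 1) + 1 + #S - 1 = (t + 1) * (j + 1) + #S by omega] at key
  have hcancel : #S * ((t + 1) * (j + 1) + 1) ≤ (t * (j + 1) + 1) * ((t + 1) * (j + 1) + #S) :=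
    Nat.le_of_mul_le_mul_right (by linarith) (Nat.mul_pos t.succ_pos (by omega : 0 < j))
  exact Nat.le_of_mul_le_mul_right (by linarith) j.succ_pos
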